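/- Assume transaction costs are zero, so G(a) = Σ_{t<m} a_t·(H_T^{(t)} − H_t^{(t)}) and all policies are admissible. Let a* be a policy minimizing E_P[exp(−G(a))] over all policies, with 0 < E_P[exp(−G(a*))] < ∞, and define Q* by dQ*/dP = exp(−G(a*)) / E_P[exp(−G(a*))]. Then Q* is an equivalent martingale measure: for every t < m and every instrument i, E_{Q*}[H_T^{(t,i)} | 𝓕_t] = H_t^{(t,i)} Q*-almost surely. -/

import Mathlib

/-! Perturb the optimal policy `a*` at a time `t < m` by `ε` units of instrument `i`, held on an
event `s ∈ F t`. The gain moves by `ε • 1_s (H_T - H_t)`, so `ε = 0` minimizes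
`ε ↦ E_P[exp(-G(a*)) exp(-ε 1_s (H_T - H_t))]`; all quantities are bounded, so we may
differentiate under the integral sign and get `E_P[exp(-G(a*)) 1_s (H_T - H_t)] = 0`. After
normalization this says `E_{Q*}[1_s H_T] = E_{Q*}[1_s H_t]` for every `s ∈ F t`, which
characterizes `H_t` as the `Q*`-conditional expectation of `H_T` given `F t`. -/

open MeasureTheory ENNReal Real Filter Set

noncomputable section

variable {Ω : Type*}

/-- A policy: at each time `t < m`, an `F t`-measurable, essentially bounded action in `ℝ^n`. -/
def IsPolicy {mΩ : MeasurableSpace Ω} (P : Measure Ω) (m n : ℕ) (F : ℕ → MeasurableSpace Ω)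
    (a : ℕ → Ω → Fin n → ℝ) : Prop :=
  ∀ t < m, Measurable[F t] (a t) ∧ ∃ C : ℝ, ∀ᵐ ω ∂P, ∀ i, |a t ω i| ≤ C

/-- Terminal gain of a policy with zero transaction costs:
`G(a) = Σ_{t<m} a_t · (H_T^{(t)} - H_t^{(t)})`. -/
def linGain (m n : ℕ) (Hmid HT : ℕ → Ω → Fin n → ℝ)
    (a : ℕ → Ω → Fin n → ℝ) (ω : Ω) : ℝ :=
  ∑ t ∈ Finset.range m, ∑ i, a t ω i * (HT t ω i - Hmid t ω i)

section General

variable {α : Type*} {m mα : MeasurableSpace α} {μ : Measure α}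

theorem exists_ae_abs_sum_le {ι : Type*} (s : Finset ι) {f : ι → α → ℝ}
    (hf : ∀ i ∈ s, ∃ C, ∀ᵐ x ∂μ, |f i x| ≤ C) :
    ∃ C, ∀ᵐ x ∂μ, |∑ i ∈ s, f i x| ≤ C := by
  classical
  induction s using Finset.induction_on with
  | empty => exact ⟨0, by simp⟩
  | insert j s hj ih =>
    obtain ⟨C₁, h₁⟩ := hf j (Finset.mem_insert_self j s)
    obtain ⟨C₂, h₂⟩ := ih fun i hi => hf i (Finset.mem_insert_of_mem hi)
    refine ⟨C₁ + C₂, ?_⟩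
    filter_upwards [h₁, h₂] with x hx₁ hx₂
    rw [Finset.sum_insert hj]
    exact (abs_add_le _ _).trans (add_le_add hx₁ hx₂)

theorem integral_mul_eq_zero_of_forall_integral_le_integral_mul_exp {W h : α → ℝ} {M : ℝ}
    (hW : Integrable W μ) (hh : AEStronglyMeasurable h μ) (hhM : ∀ᵐ x ∂μ, |h x| ≤ M)
    (hmin : ∀ ε : ℝ, ∫ x, W x ∂μ ≤ ∫ x, W x * exp (-(ε * h x)) ∂μ) :
    ∫ x, W x * h x ∂μ = 0 := by
  set φ : ℝ → ℝ := fun ε => ∫ x, W x * exp (-(ε * h x)) ∂μ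
  have hbound : ∀ᵐ x ∂μ, ∀ ε ∈ Icc (-1 : ℝ) 1,
      ‖W x * (-h x * exp (-(ε * h x)))‖ ≤ |W x| * (M * exp M) := by
    filter_upwards [hhM] with x hx ε hε
    have hεh : -(ε * h x) ≤ M := calc
      -(ε * h x) ≤ |ε| * |h x| := by rw [← abs_mul]; exact neg_le_abs _
      _ ≤ 1 * M := by gcongr; exact abs_le.2 hε
      _ = M := one_mul M
    have hM : 0 ≤ M := (abs_nonneg _).trans hx
    rw [norm_mul, norm_mul, norm_neg, norm_eq_abs, norm_eq_abs, norm_eq_abs, abs_exp]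
    gcongr
  have hderiv : HasDerivAt φ (∫ x, W x * (-h x * exp (-(0 * h x))) ∂μ) 0 :=
    (hasDerivAt_integral_of_dominated_loc_of_deriv_le (x₀ := (0 : ℝ))
      (F := fun ε x => W x * exp (-(ε * h x)))
      (F' := fun ε x => W x * (-h x * exp (-(ε * h x))))
      (Icc_mem_nhds neg_one_lt_zero zero_lt_one) (.of_forall fun _ => by fun_prop)
      (by simpa using hW) (by fun_prop) hbound (hW.abs.mul_const _)
      (.of_forall fun x ε _ => ((hasDerivAt_mul_const (h x)).neg.exp.const_mul (W x)).congr_deriv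
        (by simp only [Pi.neg_apply]; ring))).2
  have hmin' : IsLocalMin φ 0 := Eventually.of_forall fun ε => by simpa [φ] using hmin ε
  simpa only [zero_mul, neg_zero, exp_zero, mul_one, mul_neg, integral_neg, neg_eq_zero]
    using hmin'.hasDerivAt_eq_zero hderiv

theorem condExp_withDensity_ofReal_ae_eq (hm : m ≤ mα) {D f g : α → ℝ} {Cf Cg : ℝ}
    (hD_meas : Measurable D) (hD_nonneg : ∀ x, 0 ≤ D x) (hD_int : Integrable D μ)
    (hf : Measurable f) (hf_bdd : ∀ᵐ x ∂μ, |f x| ≤ Cf)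
    (hg : StronglyMeasurable[m] g) (hg_bdd : ∀ᵐ x ∂μ, |g x| ≤ Cg)
    (hfg : ∀ s, MeasurableSet[m] s → ∫ x in s, D x * (f x - g x) ∂μ = 0) :
    let ν := μ.withDensity fun x => ENNReal.ofReal (D x)
    ν[f|m] =ᵐ[ν] g := by
  intro ν
  have : IsFiniteMeasure ν := isFiniteMeasure_withDensity_ofReal hD_int.2
  have hν_ae : ae ν ≤ ae μ := (withDensity_absolutelyContinuous _ _).ae_le
  have hf_int : Integrable f ν := .of_bound hf.aestronglyMeasurable Cf (hν_ae hf_bdd)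
  have hg_int : Integrable g ν :=
    .of_bound (hg.mono hm).aestronglyMeasurable Cg (hν_ae hg_bdd)
  have hsetIntegral (φ : α → ℝ) (s : Set α) (hs : MeasurableSet s) :
      ∫ x in s, φ x ∂ν = ∫ x in s, D x * φ x ∂μ := by
    refine (setIntegral_withDensity_eq_setIntegral_toReal_smul hD_meas.ennreal_ofReal
      (ae_of_all _ fun _ => ofReal_lt_top) φ hs).trans ?_
    simp only [toReal_ofReal (hD_nonneg _), smul_eq_mul]
  refine (ae_eq_condExp_of_forall_setIntegral_eq hm hf_int (fun s _ _ => hg_int.integrableOn)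
    (fun s hs _ => (sub_eq_zero.1 ?_).symm) hg.aestronglyMeasurable).symm
  rw [← integral_sub hf_int.integrableOn hg_int.integrableOn, hsetIntegral _ _ (hm s hs),
    hfg s hs]

theorem condExp_withDensity_div_lintegral_ae_eq (hm : m ≤ mα) {W f g : α → ℝ} {Cf Cg : ℝ}
    (hW_meas : Measurable W) (hW_nonneg : ∀ x, 0 ≤ W x) (hW_int : Integrable W μ)
    (hW_pos : 0 < ∫ x, W x ∂μ)
    (hf : Measurable f) (hf_bdd : ∀ᵐ x ∂μ, |f x| ≤ Cf)
    (hg : StronglyMeasurable[m] g) (hg_bdd : ∀ᵐ x ∂μ, |g x| ≤ Cg)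
    (hfg : ∀ s, MeasurableSet[m] s → ∫ x in s, W x * (f x - g x) ∂μ = 0) :
    let ν := μ.withDensity fun x => ENNReal.ofReal (W x) / ∫⁻ y, ENNReal.ofReal (W y) ∂μ
    ν[f|m] =ᵐ[ν] g := by
  intro ν
  simp only [ν, ← ofReal_integral_eq_lintegral_ofReal hW_int (ae_of_all _ hW_nonneg),
    ← ENNReal.ofReal_div_of_pos hW_pos]
  refine condExp_withDensity_ofReal_ae_eq hm (hW_meas.div_const _)
    (fun x => div_nonneg (hW_nonneg x) hW_pos.le) (hW_int.div_const _) hf hf_bdd hg hg_bdd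
    fun s hs => ?_
  simp_rw [div_mul_eq_mul_div, integral_div, hfg s hs, zero_div]

end General

section Market

variable {mΩ : MeasurableSpace Ω} {P : Measure Ω} {m n : ℕ} {F : ℕ → MeasurableSpace Ω}
  {Hmid HT : ℕ → Ω → Fin n → ℝ} {a b : ℕ → Ω → Fin n → ℝ}

theorem linGain_add_smul (ε : ℝ) :
    linGain m n Hmid HT (a + ε • b) = linGain m n Hmid HT a + ε • linGain m n Hmid HT b := by
  funext ω
  simp only [linGain, Pi.add_apply, Pi.smul_apply, smul_eq_mul, add_mul, Finset.sum_add_distrib,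
    Finset.mul_sum, mul_assoc]

theorem IsPolicy.add (ha : IsPolicy P m n F a) (hb : IsPolicy P m n F b) :
    IsPolicy P m n F (a + b) := by
  intro t ht
  obtain ⟨ha_meas, Ca, hCa⟩ := ha t ht
  obtain ⟨hb_meas, Cb, hCb⟩ := hb t ht
  refine ⟨ha_meas.add hb_meas, Ca + Cb, ?_⟩
  filter_upwards [hCa, hCb] with ω hωa hωb i
  exact (abs_add_le _ _).trans (add_le_add (hωa i) (hωb i))

theorem IsPolicy.const_smul (ha : IsPolicy P m n F a) (c : ℝ) : IsPolicy P m n F (c • a) := by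
  intro t ht
  obtain ⟨ha_meas, C, hC⟩ := ha t ht
  refine ⟨ha_meas.const_smul c, |c| * C, ?_⟩
  filter_upwards [hC] with ω hω i
  simpa [abs_mul] using mul_le_mul_of_nonneg_left (hω i) (abs_nonneg c)

theorem IsPolicy.measurable_linGain (ha : IsPolicy P m n F a) (hF_le : ∀ t, F t ≤ mΩ)
    (hHmid : ∀ t < m, Measurable (Hmid t)) (hHT : ∀ t < m, Measurable (HT t)) :
    Measurable (linGain m n Hmid HT a) := by
  refine Finset.measurable_fun_sum _ fun t ht => Finset.measurable_fun_sum _ fun i _ => ?_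
  rw [Finset.mem_range] at ht
  have ha_meas : Measurable (a t) := (ha t ht).1.mono (hF_le t) le_rfl
  have := hHmid t ht
  have := hHT t ht
  fun_prop

theorem IsPolicy.exists_ae_abs_linGain_le (ha : IsPolicy P m n F a)
    (hHmid_bdd : ∀ t < m, ∃ C : ℝ, ∀ᵐ ω ∂P, ∀ i, |Hmid t ω i| ≤ C)
    (hHT_bdd : ∀ t < m, ∃ C : ℝ, ∀ᵐ ω ∂P, ∀ i, |HT t ω i| ≤ C) :
    ∃ C, ∀ᵐ ω ∂P, |linGain m n Hmid HT a ω| ≤ C := by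
  refine exists_ae_abs_sum_le _ fun t ht => exists_ae_abs_sum_le _ fun i _ => ?_
  rw [Finset.mem_range] at ht
  obtain ⟨Ca, hCa⟩ := (ha t ht).2
  obtain ⟨CM, hCM⟩ := hHmid_bdd t ht
  obtain ⟨CT, hCT⟩ := hHT_bdd t ht
  refine ⟨|Ca| * (|CT| + |CM|), ?_⟩
  filter_upwards [hCa, hCM, hCT] with ω hωa hωM hωT
  rw [abs_mul]
  refine mul_le_mul ((hωa i).trans (le_abs_self _)) ?_ (abs_nonneg _) (abs_nonneg _)
  exact (abs_sub _ _).trans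
    (add_le_add ((hωT i).trans (le_abs_self _)) ((hωM i).trans (le_abs_self _)))

theorem IsPolicy.integrable_exp_neg_linGain [IsFiniteMeasure P] (ha : IsPolicy P m n F a)
    (hF_le : ∀ t, F t ≤ mΩ) (hHmid : ∀ t < m, Measurable (Hmid t))
    (hHT : ∀ t < m, Measurable (HT t))
    (hHmid_bdd : ∀ t < m, ∃ C : ℝ, ∀ᵐ ω ∂P, ∀ i, |Hmid t ω i| ≤ C)
    (hHT_bdd : ∀ t < m, ∃ C : ℝ, ∀ᵐ ω ∂P, ∀ i, |HT t ω i| ≤ C) :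
    Integrable (fun ω => exp (-linGain m n Hmid HT a ω)) P := by
  obtain ⟨C, hC⟩ := ha.exists_ae_abs_linGain_le hHmid_bdd hHT_bdd
  refine Integrable.of_bound (ha.measurable_linGain hF_le hHmid hHT).neg.exp.aestronglyMeasurable
    (exp C) ?_
  filter_upwards [hC] with ω hω
  rw [Real.norm_eq_abs, abs_exp, exp_le_exp]
  exact (neg_le_abs _).trans hω

theorem IsPolicy.integral_exp_neg_linGain_mul_linGain_eq_zero [IsFiniteMeasure P]
    (ha : IsPolicy P m n F a) (hb : IsPolicy P m n F b)
    (hF_le : ∀ t, F t ≤ mΩ) (hHmid : ∀ t < m, Measurable (Hmid t))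
    (hHT : ∀ t < m, Measurable (HT t))
    (hHmid_bdd : ∀ t < m, ∃ C : ℝ, ∀ᵐ ω ∂P, ∀ i, |Hmid t ω i| ≤ C)
    (hHT_bdd : ∀ t < m, ∃ C : ℝ, ∀ᵐ ω ∂P, ∀ i, |HT t ω i| ≤ C)
    (hmin : ∀ a', IsPolicy P m n F a' →
      (∫⁻ ω, ENNReal.ofReal (exp (-linGain m n Hmid HT a ω)) ∂P) ≤
        ∫⁻ ω, ENNReal.ofReal (exp (-linGain m n Hmid HT a' ω)) ∂P) :
    ∫ ω, exp (-linGain m n Hmid HT a ω) * linGain m n Hmid HT b ω ∂P = 0 := by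
  obtain ⟨C, hC⟩ := hb.exists_ae_abs_linGain_le hHmid_bdd hHT_bdd
  refine integral_mul_eq_zero_of_forall_integral_le_integral_mul_exp
    (ha.integrable_exp_neg_linGain hF_le hHmid hHT hHmid_bdd hHT_bdd)
    (hb.measurable_linGain hF_le hHmid hHT).aestronglyMeasurable hC fun ε => ?_
  have hperturb := ha.add (hb.const_smul ε)
  have hmin_ε := hmin _ hperturb
  rw [← ofReal_integral_eq_lintegral_ofReal
      (ha.integrable_exp_neg_linGain hF_le hHmid hHT hHmid_bdd hHT_bdd)
      (ae_of_all _ fun _ => (exp_pos _).le),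
    ← ofReal_integral_eq_lintegral_ofReal
      (hperturb.integrable_exp_neg_linGain hF_le hHmid hHT hHmid_bdd hHT_bdd)
      (ae_of_all _ fun _ => (exp_pos _).le),
    ENNReal.ofReal_le_ofReal_iff (integral_nonneg fun _ => (exp_pos _).le)] at hmin_ε
  simpa only [linGain_add_smul, Pi.add_apply, Pi.smul_apply, smul_eq_mul, neg_add, exp_add]
    using hmin_ε

def indicatorTrade (t : ℕ) (i : Fin n) (s : Set Ω) : ℕ → Ω → Fin n → ℝ :=
  Pi.single t (s.indicator fun _ => Pi.single i 1)

theorem isPolicy_indicatorTrade {t : ℕ} (i : Fin n) {s : Set Ω} (hs : MeasurableSet[F t] s) :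
    IsPolicy P m n F (indicatorTrade t i s) := by
  intro t' _
  rcases eq_or_ne t' t with rfl | ht'
  · rw [indicatorTrade, Pi.single_eq_same]
    refine ⟨measurable_const.indicator hs, 1, ae_of_all _ fun ω j => ?_⟩
    by_cases hω : ω ∈ s <;> by_cases hj : j = i <;> simp [hω, hj]
  · rw [indicatorTrade, Pi.single_eq_of_ne ht']
    exact ⟨measurable_const, 0, ae_of_all _ fun ω j => by simp⟩

theorem linGain_indicatorTrade {t : ℕ} (ht : t < m) (i : Fin n) (s : Set Ω) :
    linGain m n Hmid HT (indicatorTrade t i s) = s.indicator fun ω => HT t ω i - Hmid t ω i := by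
  funext ω
  rw [linGain, Finset.sum_eq_single_of_mem t (Finset.mem_range.2 ht) fun t' _ ht' => by
    simp [indicatorTrade, Pi.single_eq_of_ne ht'], indicatorTrade, Pi.single_eq_same]
  by_cases hω : ω ∈ s <;> simp [hω, Pi.single_apply]

end Market

theorem stmt_10_general
    {mΩ : MeasurableSpace Ω} (P : Measure Ω) [IsProbabilityMeasure P]
    (m n : ℕ) (F : ℕ → MeasurableSpace Ω) (hF_le : ∀ t, F t ≤ mΩ)
    (Hmid HT : ℕ → Ω → Fin n → ℝ)
    (hHmid_meas : ∀ t < m, Measurable[F t] (Hmid t))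
    (hHT_meas : ∀ t < m, Measurable[F m] (HT t))
    (hHmid_bdd : ∀ t < m, ∃ C : ℝ, ∀ᵐ ω ∂P, ∀ i, |Hmid t ω i| ≤ C)
    (hHT_bdd : ∀ t < m, ∃ C : ℝ, ∀ᵐ ω ∂P, ∀ i, |HT t ω i| ≤ C)
    (astar : ℕ → Ω → Fin n → ℝ) (hastar : IsPolicy P m n F astar)
    (hmin : ∀ a, IsPolicy P m n F a →
      (∫⁻ ω, ENNReal.ofReal (Real.exp (-linGain m n Hmid HT astar ω)) ∂P) ≤
        ∫⁻ ω, ENNReal.ofReal (Real.exp (-linGain m n Hmid HT a ω)) ∂P) :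
    let Qstar : Measure Ω := P.withDensity (fun ω =>
      ENNReal.ofReal (Real.exp (-linGain m n Hmid HT astar ω)) /
        ∫⁻ ω', ENNReal.ofReal (Real.exp (-linGain m n Hmid HT astar ω')) ∂P)
    ∀ t < m, ∀ i : Fin n,
      (Qstar[fun ω => HT t ω i | F t]) =ᵐ[Qstar] fun ω => Hmid t ω i := by
  intro Qstar t ht i
  have hHmid : ∀ t < m, Measurable (Hmid t) := fun t ht => (hHmid_meas t ht).mono (hF_le t) le_rfl
  have hHT : ∀ t < m, Measurable (HT t) := fun t ht => (hHT_meas t ht).mono (hF_le m) le_rfl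
  have hW_int := hastar.integrable_exp_neg_linGain hF_le hHmid hHT hHmid_bdd hHT_bdd
  obtain ⟨CT, hCT⟩ := hHT_bdd t ht
  obtain ⟨CM, hCM⟩ := hHmid_bdd t ht
  refine condExp_withDensity_div_lintegral_ae_eq (hF_le t)
    (hastar.measurable_linGain hF_le hHmid hHT).neg.exp (fun _ => (exp_pos _).le) hW_int
    (integral_exp_pos hW_int) (hHT t ht).eval (hCT.mono fun _ h => h i)
    ((measurable_pi_apply i).comp (hHmid_meas t ht)).stronglyMeasurable
    (hCM.mono fun _ h => h i) fun s hs => ?_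
  have hfoc := hastar.integral_exp_neg_linGain_mul_linGain_eq_zero
    (isPolicy_indicatorTrade i hs) hF_le hHmid hHT hHmid_bdd hHT_bdd hmin
  rw [linGain_indicatorTrade ht] at hfoc
  rw [← integral_indicator (hF_le t s hs)]
  simpa only [indicator_mul_right] using hfoc

/-- With zero transaction costs, if `a*` minimizes `E_P[exp(-G(a))]` over
all policies (with finite positive minimum) and `dQ*/dP = exp(-G(a*))/E_P[exp(-G(a*))]`, then
`Q*` is a martingale measure: `E_{Q*}[H_T^{(t,i)} | F_t] = H_t^{(t,i)}` `Q*`-a.s. -/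
theorem stmt_10
    {mΩ : MeasurableSpace Ω} (P : Measure Ω) [IsProbabilityMeasure P]
    (m n : ℕ) (F : ℕ → MeasurableSpace Ω) (hF_mono : Monotone F) (hF_le : ∀ t, F t ≤ mΩ)
    (Hmid HT : ℕ → Ω → Fin n → ℝ)
    (hHmid_meas : ∀ t < m, Measurable[F t] (Hmid t))
    (hHT_meas : ∀ t < m, Measurable[F m] (HT t))
    (hHmid_bdd : ∀ t < m, ∃ C : ℝ, ∀ᵐ ω ∂P, ∀ i, |Hmid t ω i| ≤ C)
    (hHT_bdd : ∀ t < m, ∃ C : ℝ, ∀ᵐ ω ∂P, ∀ i, |HT t ω i| ≤ C)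
    (astar : ℕ → Ω → Fin n → ℝ) (hastar : IsPolicy P m n F astar)
    (hmin : ∀ a, IsPolicy P m n F a →
      (∫⁻ ω, ENNReal.ofReal (Real.exp (-linGain m n Hmid HT astar ω)) ∂P) ≤
        ∫⁻ ω, ENNReal.ofReal (Real.exp (-linGain m n Hmid HT a ω)) ∂P)
    (hZpos : 0 < ∫⁻ ω, ENNReal.ofReal (Real.exp (-linGain m n Hmid HT astar ω)) ∂P)
    (hZfin : (∫⁻ ω, ENNReal.ofReal (Real.exp (-linGain m n Hmid HT astar ω)) ∂P) ≠ ∞) :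
    let Qstar : Measure Ω := P.withDensity (fun ω =>
      ENNReal.ofReal (Real.exp (-linGain m n Hmid HT astar ω)) /
        ∫⁻ ω', ENNReal.ofReal (Real.exp (-linGain m n Hmid HT astar ω')) ∂P)
    ∀ t < m, ∀ i : Fin n,
      (Qstar[fun ω => HT t ω i | F t]) =ᵐ[Qstar] fun ω => Hmid t ω i :=
  stmt_10_general P m n F hF_le Hmid HT hHmid_meas hHT_meas hHmid_bdd hHT_bdd astar hastar hmin
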